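/- An Alexander quandle X (a ℤ[T^{±1}]-module with operation x◁y = y + T(x−y)) is connected if and only if (1−T)X = X. -/

import Mathlib

open LaurentPolynomial

/-- The right translation `(· ◁ y)` of the Alexander quandle as a permutation. -/
noncomputable def alexAct {X : Type*} [AddCommGroup X] [Module (LaurentPolynomial ℤ) X]
    (y : X) : Equiv.Perm X where
  toFun x := (T 1 : LaurentPolynomial ℤ) • x + (1 - (T 1 : LaurentPolynomial ℤ)) • y
  invFun x := (T (-1) : LaurentPolynomial ℤ) •
    (x - (1 - (T 1 : LaurentPolynomial ℤ)) • y)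
  left_inv x := by
    have h : (T (-1) : LaurentPolynomial ℤ) * T 1 = 1 := by
      rw [← T_add]; norm_num
    show (T (-1) : LaurentPolynomial ℤ) •
      ((T 1 : LaurentPolynomial ℤ) • x + (1 - (T 1 : LaurentPolynomial ℤ)) • y
        - (1 - (T 1 : LaurentPolynomial ℤ)) • y) = x
    rw [add_sub_cancel_right, smul_smul, h, one_smul]
  right_inv x := by
    have h : (T 1 : LaurentPolynomial ℤ) * T (-1) = 1 := by
      rw [← T_add]; norm_num
    show (T 1 : LaurentPolynomial ℤ) • ((T (-1) : LaurentPolynomial ℤ) •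
      (x - (1 - (T 1 : LaurentPolynomial ℤ)) • y)) + (1 - (T 1 : LaurentPolynomial ℤ)) • y = x
    rw [smul_smul, h, one_smul, sub_add_cancel]

/-! Since `x ◁ y - x = (1 - T)(y - x)`, every right translation, hence every element of the
group they generate, keeps each point in its coset of `(1 - T)X`; conversely, when
`(1 - T)X = X` a single translation already carries any `x` to any `y`. -/

theorem Equiv.Perm.sub_mem_of_mem_closure {X : Type*} [AddGroup X] (A : AddSubgroup X)
    {s : Set (Equiv.Perm X)} (hs : ∀ g ∈ s, ∀ x, g x - x ∈ A) {f : Equiv.Perm X}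
    (hf : f ∈ Subgroup.closure s) (x : X) : f x - x ∈ A := by
  induction hf using Subgroup.closure_induction generalizing x with
  | mem g hg => exact hs g hg x
  | one => simp
  | mul g h _ _ hg hh =>
    simpa only [Equiv.Perm.mul_apply, sub_add_sub_cancel] using A.add_mem (hg (h x)) (hh x)
  | inv g _ hg =>
    simpa only [Equiv.Perm.coe_inv, Equiv.apply_symm_apply, neg_sub] using A.neg_mem (hg (g⁻¹ x))

theorem alexAct_apply_sub {X : Type*} [AddCommGroup X] [Module (LaurentPolynomial ℤ) X]
    (y x : X) : alexAct y x - x = (1 - T 1 : LaurentPolynomial ℤ) • (y - x) := by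
  change (T 1 : LaurentPolynomial ℤ) • x + (1 - T 1 : LaurentPolynomial ℤ) • y - x = _
  module

theorem stmt8 (X : Type*) [AddCommGroup X] [Module (LaurentPolynomial ℤ) X] :
    (∀ x y : X, ∃ f ∈ Subgroup.closure (Set.range (alexAct (X := X))), f x = y) ↔
      Function.Surjective (fun x : X => (1 - (T 1 : LaurentPolynomial ℤ)) • x) := by
  let A : AddSubgroup X := (DistribSMul.toAddMonoidHom X (1 - T 1 : LaurentPolynomial ℤ)).range
  constructor
  · intro hconn y
    obtain ⟨f, hf, rfl⟩ := hconn 0 y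
    have hgen : ∀ g ∈ Set.range (alexAct (X := X)), ∀ x, g x - x ∈ A := by
      rintro _ ⟨z, rfl⟩ x
      exact ⟨z - x, (alexAct_apply_sub z x).symm⟩
    obtain ⟨w, hw⟩ := Equiv.Perm.sub_mem_of_mem_closure A hgen hf 0
    exact ⟨w, by simpa using hw⟩
  · intro hsurj x y
    obtain ⟨w, hw⟩ := hsurj (y - x)
    refine ⟨alexAct (w + x), Subgroup.subset_closure ⟨w + x, rfl⟩, ?_⟩
    simp only at hw
    rw [sub_eq_iff_eq_add.mp (alexAct_apply_sub (w + x) x), add_sub_cancel_right, hw,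
      sub_add_cancel]
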